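/- For every maximal isotropic subspace W ⊆ V one has W = {v ∈ V : m_v(λ) = 0 for all λ ∈ ℓ_W}. Consequently, the assignment W ↦ ℓ_W, from maximal isotropic subspaces of V to lines in ∧U, is injective. -/

import Mathlib

/-!
The operators satisfy the Clifford relation `m_v m_w + m_w m_v = ⟨v, w⟩`, so for an isotropic `W`
the `m_w`, `w ∈ W`, pairwise anticommute and (as `char k ≠ 2`) square to zero. Applying the `m_w`
for a spanning set of `W` one after another to a nonzero vector, and keeping each nonzero result,
produces a nonzero `λ ∈ ℓ_W`. If `m_v λ = 0`, the Clifford relation applied to `λ` gives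
`⟨v, w⟩ λ = 0`, i.e. `v ⊥ W`. A maximal isotropic `W` has half the dimension of the nondegenerate
space `V`, hence equals `W^⊥`, so `v ∈ W`.
-/

open Module

/-- The operator `m_v : ∧U → ∧U`, `α ↦ w ∧ α + θ⌟α`, for `v = (w,θ) ∈ V = U × U*`. -/
noncomputable def mOp (k : Type*) [Field k] (U : Type*) [AddCommGroup U] [Module k U]
    (v : U × Module.Dual k U) : Module.End k (ExteriorAlgebra k U) :=
  LinearMap.mulLeft k (ExteriorAlgebra.ι k v.1)
    + CliffordAlgebra.contractLeft (Q := (0 : QuadraticForm k U)) v.2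

/-- The pure spinor space `ℓ_W := {λ ∈ ∧U : m_v(λ) = 0 for all v ∈ W}`. -/
noncomputable def ellW (k : Type*) [Field k] (U : Type*) [AddCommGroup U] [Module k U]
    (W : Submodule k (U × Module.Dual k U)) : Submodule k (ExteriorAlgebra k U) :=
  ⨅ v ∈ W, LinearMap.ker (mOp k U v)

theorem Module.End.exists_ne_zero_forall_apply_eq_zero {R M ι : Type*} [Ring R] [AddCommGroup M]
    [Module R M] [Nontrivial M] (T : ι → Module.End R M) (s : Finset ι)
    (hsq : ∀ i ∈ s, T i * T i = 0) (hanti : ∀ i ∈ s, ∀ j ∈ s, T i * T j + T j * T i = 0) :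
    ∃ y ≠ 0, ∀ i ∈ s, T i y = 0 := by
  classical
  induction s using Finset.induction_on with
  | empty => simpa using exists_ne (0 : M)
  | insert a s _ ih =>
    simp only [Finset.mem_insert, forall_eq_or_imp] at hsq hanti ⊢
    obtain ⟨y, hy, hsy⟩ := ih hsq.2 fun i hi j hj => (hanti.2 i hi).2 j hj
    by_cases hay : T a y = 0
    · exact ⟨y, hy, hay, hsy⟩
    -- otherwise `T a y` works: `T a ^ 2 = 0`, and the other `T i` anticommute with `T a`
    refine ⟨T a y, hay, by simpa using congrArg (· y) hsq.1, fun i hi => ?_⟩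
    have := congrArg (· y) ((hanti.2 i hi).1)
    simpa [hsy i hi] using this

namespace LinearMap.BilinForm

variable {K V : Type*} [Field K] [AddCommGroup V] [Module K V] [FiniteDimensional K V]
  {B : LinearMap.BilinForm K V}

theorem orthogonal_eq_self_of_le_orthogonal (hB : B.Nondegenerate) {W : Submodule K V}
    (hW : W ≤ B.orthogonal W) (hdim : 2 * finrank K W = finrank K V) : B.orthogonal W = W :=
  (Submodule.eq_of_le_of_finrank_le hW (by rw [finrank_orthogonal hB]; omega)).symm

end LinearMap.BilinForm

section
variable (k : Type*) [Field k] (U : Type*) [AddCommGroup U] [Module k U]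

noncomputable def hyperbolicForm : LinearMap.BilinForm k (U × Dual k U) :=
  LinearMap.mk₂ k (fun v w => v.2 w.1 + w.2 v.1)
    (fun _ _ _ => by simp only [Prod.fst_add, Prod.snd_add, map_add, LinearMap.add_apply]; abel)
    (fun _ _ _ => by
      simp only [Prod.smul_fst, Prod.smul_snd, map_smul, LinearMap.smul_apply, smul_add])
    (fun _ _ _ => by simp only [Prod.fst_add, Prod.snd_add, map_add, LinearMap.add_apply]; abel)
    (fun _ _ _ => by
      simp only [Prod.smul_fst, Prod.smul_snd, map_smul, LinearMap.smul_apply, smul_add])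

variable {k U}

theorem hyperbolicForm_apply (v w : U × Dual k U) :
    hyperbolicForm k U v w = v.2 w.1 + w.2 v.1 := rfl

theorem hyperbolicForm_nondegenerate : (hyperbolicForm k U).Nondegenerate := by
  refine (LinearMap.IsRefl.nondegenerate_iff_separatingLeft
    (fun v w h => by rwa [hyperbolicForm_apply, add_comm, ← hyperbolicForm_apply] at h)).mpr
    fun v hv => ?_
  have h1 : v.1 = 0 := (Module.forall_dual_apply_eq_zero_iff k v.1).mp fun φ => by
    simpa [hyperbolicForm_apply] using hv (0, φ)
  have h2 : v.2 = 0 := LinearMap.ext fun u => by simpa [hyperbolicForm_apply] using hv (u, 0)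
  exact Prod.ext h1 h2

theorem finrank_prod_dual [FiniteDimensional k U] :
    finrank k (U × Dual k U) = 2 * finrank k U := by
  rw [finrank_prod, Subspace.dual_finrank_eq]; ring

noncomputable def mOpₗ : (U × Dual k U) →ₗ[k] Module.End k (ExteriorAlgebra k U) :=
  LinearMap.mul k _ ∘ₗ ExteriorAlgebra.ι k ∘ₗ LinearMap.fst k U (Dual k U)
    + CliffordAlgebra.contractLeft ∘ₗ LinearMap.snd k U (Dual k U)

theorem mOpₗ_apply (v : U × Dual k U) : mOpₗ v = mOp k U v := rfl

theorem mOp_mul_self (v : U × Dual k U) : mOp k U v * mOp k U v = v.2 v.1 • 1 := by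
  refine LinearMap.ext fun x => ?_
  simp only [mOp, Module.End.mul_apply, LinearMap.add_apply, LinearMap.mulLeft_apply,
    mul_add, CliffordAlgebra.contractLeft_ι_mul, CliffordAlgebra.contractLeft_contractLeft,
    ← mul_assoc, ExteriorAlgebra.ι_sq_zero, LinearMap.smul_apply, Module.End.one_apply]
  simp

theorem mOp_mul_add_mul_swap (v w : U × Dual k U) :
    mOp k U v * mOp k U w + mOp k U w * mOp k U v = hyperbolicForm k U v w • 1 := by
  have h := mOp_mul_self (v + w)
  rw [← mOpₗ_apply, map_add, mOpₗ_apply, mOpₗ_apply] at h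
  simp only [add_mul, mul_add, mOp_mul_self, Prod.fst_add, Prod.snd_add, map_add,
    LinearMap.add_apply, add_smul, hyperbolicForm_apply] at h ⊢
  linear_combination (norm := abel) h

theorem mem_ellW_iff {W : Submodule k (U × Dual k U)} {l : ExteriorAlgebra k U} :
    l ∈ ellW k U W ↔ ∀ v ∈ W, mOp k U v l = 0 := by
  simp [ellW]

theorem mem_ellW_span_iff {s : Set (U × Dual k U)} {l : ExteriorAlgebra k U} :
    l ∈ ellW k U (Submodule.span k s) ↔ ∀ v ∈ s, mOp k U v l = 0 := by
  rw [mem_ellW_iff]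
  exact Submodule.span_le (p := LinearMap.ker (mOpₗ.flip l))

theorem hyperbolicForm_eq_zero_of_mOp_apply_eq_zero {v w : U × Dual k U} {l : ExteriorAlgebra k U}
    (hv : mOp k U v l = 0) (hw : mOp k U w l = 0) (hl : l ≠ 0) : hyperbolicForm k U v w = 0 := by
  have h := congrArg (· l) (mOp_mul_add_mul_swap v w)
  simp only [LinearMap.add_apply, Module.End.mul_apply, hv, hw, map_zero, add_zero,
    LinearMap.smul_apply, Module.End.one_apply] at h
  exact (smul_eq_zero.mp h.symm).resolve_right hl

theorem exists_mem_ellW_ne_zero [NeZero (2 : k)] [FiniteDimensional k U]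
    {W : Submodule k (U × Dual k U)} (hW : W ≤ (hyperbolicForm k U).orthogonal W) :
    ∃ l ∈ ellW k U W, l ≠ 0 := by
  obtain ⟨s, rfl⟩ := IsNoetherian.noetherian W
  have hiso : ∀ v ∈ s, ∀ w ∈ s, hyperbolicForm k U v w = 0 := fun v hv w hw =>
    hW (Submodule.subset_span hw) v (Submodule.subset_span hv)
  obtain ⟨l, hl, hls⟩ := Module.End.exists_ne_zero_forall_apply_eq_zero (mOp k U) s
    (fun v hv => by
      have h2 : (2 : k) * v.2 v.1 = 0 := by rw [two_mul, ← hyperbolicForm_apply, hiso v hv v hv]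
      rw [mOp_mul_self, (mul_eq_zero.mp h2).resolve_left two_ne_zero, zero_smul])
    (fun v hv w hw => by rw [mOp_mul_add_mul_swap, hiso v hv w hw, zero_smul])
  exact ⟨l, mem_ellW_span_iff.mpr hls, hl⟩

theorem le_orthogonal_hyperbolicForm_iff {W : Submodule k (U × Dual k U)} :
    W ≤ (hyperbolicForm k U).orthogonal W ↔ ∀ v ∈ W, ∀ w ∈ W, v.2 w.1 + w.2 v.1 = 0 :=
  ⟨fun h v hv _ hw => h hw v hv, fun h w hw v hv => h v hv w hw⟩

theorem mem_iff_forall_mem_ellW_mOp_apply_eq_zero [NeZero (2 : k)] [FiniteDimensional k U]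
    {W : Submodule k (U × Dual k U)} (hW : W ≤ (hyperbolicForm k U).orthogonal W)
    (hdim : finrank k W = finrank k U) (v : U × Dual k U) :
    v ∈ W ↔ ∀ l ∈ ellW k U W, mOp k U v l = 0 := by
  refine ⟨fun hv l hl => mem_ellW_iff.mp hl v hv, fun hv => ?_⟩
  obtain ⟨l, hlW, hl⟩ := exists_mem_ellW_ne_zero hW
  rw [← LinearMap.BilinForm.orthogonal_eq_self_of_le_orthogonal hyperbolicForm_nondegenerate hW
    (by rw [hdim, finrank_prod_dual]), LinearMap.BilinForm.mem_orthogonal_iff]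
  exact fun w hw =>
    hyperbolicForm_eq_zero_of_mOp_apply_eq_zero (mem_ellW_iff.mp hlW w hw) (hv l hlW) hl

end

/-- for every maximal isotropic subspace `W ⊆ V` one has
`W = {v ∈ V : m_v(λ) = 0 for all λ ∈ ℓ_W}`; consequently `W ↦ ℓ_W` is injective on
maximal isotropic subspaces. -/
theorem stmt4 (k : Type*) [Field k] [CharZero k] (U : Type*) [AddCommGroup U] [Module k U]
    [FiniteDimensional k U] :
    (∀ W : Submodule k (U × Module.Dual k U),
      (∀ v ∈ W, ∀ w ∈ W, v.2 w.1 + w.2 v.1 = (0 : k)) →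
      Module.finrank k W = Module.finrank k U →
      ∀ v : U × Module.Dual k U, v ∈ W ↔ ∀ l ∈ ellW k U W, mOp k U v l = 0)
    ∧ ∀ W₁ W₂ : Submodule k (U × Module.Dual k U),
      (∀ v ∈ W₁, ∀ w ∈ W₁, v.2 w.1 + w.2 v.1 = (0 : k)) →
      Module.finrank k W₁ = Module.finrank k U →
      (∀ v ∈ W₂, ∀ w ∈ W₂, v.2 w.1 + w.2 v.1 = (0 : k)) →
      Module.finrank k W₂ = Module.finrank k U →
      ellW k U W₁ = ellW k U W₂ → W₁ = W₂ := by
  refine ⟨fun W hiso => mem_iff_forall_mem_ellW_mOp_apply_eq_zero (le_orthogonal_hyperbolicForm_iff.mpr hiso),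
    fun W₁ W₂ hiso₁ hdim₁ hiso₂ hdim₂ hell => ?_⟩
  ext v
  rw [mem_iff_forall_mem_ellW_mOp_apply_eq_zero (le_orthogonal_hyperbolicForm_iff.mpr hiso₁) hdim₁,
    mem_iff_forall_mem_ellW_mOp_apply_eq_zero (le_orthogonal_hyperbolicForm_iff.mpr hiso₂) hdim₂, hell]
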